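/- For a fixed B ∈ 2^ℕ, the class {A : A ≤_{T(tu)} B} is closed downward under ≤_{wtt} and closed under join ⊕ (i.e., it is an ideal in the wtt-degrees). -/

import Mathlib

open scoped Classical
open Filter

/-- The prefix of length `n` of a set (element of Cantor space), as a binary string. -/
def opre (B : ℕ → Bool) (n : ℕ) : List Bool := (List.range n).map B

/-- An order function: computable, nondecreasing and unbounded. -/
def IsOrder (f : ℕ → ℕ) : Prop := Computable f ∧ Monotone f ∧ ∀ m, ∃ n, m ≤ f n

/-- The discrete inverse of a nondecreasing unbounded function:
`discInv f k` is the greatest `n` with `f n ≤ k`. -/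
noncomputable def discInv (f : ℕ → ℕ) (k : ℕ) : ℕ := sSup {n | f n ≤ k}

/-- There is a Turing reduction computing the function `f` from the set oracle `B`
whose use on input `n` is bounded by `u n`: a monotone partial computable
string functional which computes `f n` from the prefix `B↾(u n)`. -/
def RedUse (f : ℕ → ℕ) (B : ℕ → Bool) (u : ℕ → ℕ) : Prop :=
  ∃ F : List Bool → ℕ →. ℕ, Partrec₂ F ∧
    (∀ (σ τ : List Bool) (n y : ℕ), σ <+: τ → y ∈ F σ n → y ∈ F τ n) ∧
    ∀ n, f n ∈ F (opre B (u n)) n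

/-- A set, viewed as a `ℕ`-valued function. -/
def natOf (A : ℕ → Bool) : ℕ → ℕ := fun n => cond (A n) 1 0

/-- Turing reduction of the set `A` to the set `B` with use bounded by `u`. -/
def SRedUse (A B : ℕ → Bool) (u : ℕ → ℕ) : Prop := RedUse (natOf A) B u

/-- Turing reducibility of a function to a set. -/
def TRed (f : ℕ → ℕ) (B : ℕ → Bool) : Prop := ∃ u, RedUse f B u

/-- Weak truth-table reducibility of a function to a set: the use is computably bounded. -/
def WttRed (f : ℕ → ℕ) (B : ℕ → Bool) : Prop := ∃ u, Computable u ∧ RedUse f B u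

/-- Weak truth-table reducibility between sets. -/
def SWttRed (A B : ℕ → Bool) : Prop := WttRed (natOf A) B

/-- `A` is reducible to `B` with tiny use: for every order function `h` there is
a Turing reduction of `A` to `B` with use bounded by `h`. -/
def TtuRed (A B : ℕ → Bool) : Prop := ∀ h, IsOrder h → SRedUse A B h

/-- `A` is uniformly reducible to `B` with tiny use: a single Turing reduction of
`A` to `B` whose use function is dominated by every order function. -/
def UTtuRed (A B : ℕ → Bool) : Prop :=
  ∃ u : ℕ → ℕ, (∀ h, IsOrder h → ∀ᶠ n in atTop, u n ≤ h n) ∧ SRedUse A B u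

/-- The effective join of two sets. -/
def join (A B : ℕ → Bool) : ℕ → Bool := fun n => if n % 2 = 0 then A (n / 2) else B (n / 2)

/-- The halting set `K = {e : φ_e(e)↓}`. -/
noncomputable def Khalt : ℕ → Bool := fun e =>
  decide (((Denumerable.ofNat Nat.Partrec.Code e).eval e).Dom)

/-- `U` is an optimal machine (for plain Kolmogorov complexity on binary strings). -/
def Optimal (U : List Bool →. List Bool) : Prop :=
  Partrec U ∧ ∀ M : List Bool →. List Bool, Partrec M →
    ∃ c, ∀ (p x : List Bool), x ∈ M p → ∃ q : List Bool, q.length ≤ p.length + c ∧ x ∈ U q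

/-- Plain Kolmogorov complexity of a string relative to the machine `U`. -/
noncomputable def Cplx (U : List Bool →. List Bool) (x : List Bool) : ℕ :=
  sInf { k | ∃ p : List Bool, p.length = k ∧ x ∈ U p }

/-- Kolmogorov complexity of a natural number (coded as a binary string). -/
noncomputable def CplxN (U : List Bool →. List Bool) (n : ℕ) : ℕ := Cplx U (Nat.bits n)

/-- `A` is anti-complex: for every order function `f`, `C(A↾f(n)) ≤ n` for almost all `n`. -/
def AntiComplex (U : List Bool →. List Bool) (A : ℕ → Bool) : Prop :=
  ∀ f, IsOrder f → ∀ᶠ n in atTop, Cplx U (opre A (f n)) ≤ n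

/-- `g_A(k)` is the least `n` such that `C(A↾m) > k` for all `m ≥ n`. -/
noncomputable def gA (U : List Bool →. List Bool) (A : ℕ → Bool) (k : ℕ) : ℕ :=
  sInf {n | ∀ m, n ≤ m → k < Cplx U (opre A m)}

/-- Coding of binary strings by natural numbers, ordered by length first. -/
def strToNat (l : List Bool) : ℕ := l.foldl (fun a b => 2 * a + cond b 1 0) 1 - 1

/-- The least `U`-description of the string `x`, as a natural number. -/
noncomputable def leastDesc (U : List Bool →. List Bool) (x : List Bool) : ℕ :=
  sInf {m | ∃ p : List Bool, strToNat p = m ∧ x ∈ U p}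

/-- The set `A* = {(A↾g_A(k))* : k ∈ ℕ}` of least descriptions of the segments `A↾g_A(k)`. -/
noncomputable def Astar (U : List Bool →. List Bool) (A : ℕ → Bool) : ℕ → Bool :=
  fun m => decide (∃ k, m = leastDesc U (opre A (gA U A k)))

/-- A c.e. trace for `f` bounded by `h`: a uniformly c.e. sequence of finite sets
`T n` with `f n ∈ T n` and `|T n| ≤ h n`. -/
def CeTrace (h f : ℕ → ℕ) : Prop :=
  ∃ S : ℕ → ℕ → Prop, REPred (fun p : ℕ × ℕ => S p.1 p.2) ∧
    ∀ n, S n (f n) ∧ { y | S n y }.Finite ∧ Set.ncard { y | S n y } ≤ h n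

/-- The wtt-degree of `A` is r.e. traceable. -/
def ReTraceableWtt (A : ℕ → Bool) : Prop :=
  ∃ h, IsOrder h ∧ ∀ f : ℕ → ℕ, WttRed f A → CeTrace h f

/-- A computable trace for `f` bounded by `h` (finite sets given by canonical indices,
here: by computable lists). -/
def CompTrace (h f : ℕ → ℕ) : Prop :=
  ∃ T : ℕ → List ℕ, Computable T ∧ ∀ n, f n ∈ T n ∧ (T n).length ≤ h n

/-- Truth-table reducibility of a function to a set: a total computable functional
with computably bounded use. -/
def TtRed (f : ℕ → ℕ) (A : ℕ → Bool) : Prop :=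
  ∃ u : ℕ → ℕ, Computable u ∧ ∃ F : List Bool → ℕ → ℕ, Computable₂ F ∧
    ∀ n, F (opre A (u n)) n = f n

/-- `A` is Schnorr trivial (via the Franklin–Stephan characterisation:
its truth-table degree is computably traceable). -/
def SchnorrTrivial (A : ℕ → Bool) : Prop :=
  ∃ h, IsOrder h ∧ ∀ f : ℕ → ℕ, TtRed f A → CompTrace h f

/-- `A` is truth-table reducible to `B` with tiny use: for every order function `h`
there is a total computable functional computing `A` from `B` with use bounded by `h`. -/
def TttuRed (A B : ℕ → Bool) : Prop :=
  ∀ h, IsOrder h → ∃ F : List Bool → ℕ → Bool, Computable₂ F ∧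
    ∀ n, F (opre B (h n)) n = A n

/-- `g` dominates every computable function. -/
def Dominant (g : ℕ → ℕ) : Prop :=
  ∀ f : ℕ → ℕ, Computable f → ∀ᶠ n in atTop, f n ≤ g n

/-- Prefix of a function oracle. -/
def fpre (f : ℕ → ℕ) (n : ℕ) : List ℕ := (List.range n).map f

/-- Reduction of a set `A` to a function oracle `f` with use bounded by `u`. -/
def RedUseFn (A : ℕ → Bool) (f : ℕ → ℕ) (u : ℕ → ℕ) : Prop :=
  ∃ F : List ℕ → ℕ →. ℕ, Partrec₂ F ∧
    (∀ (σ τ : List ℕ) (n y : ℕ), σ <+: τ → y ∈ F σ n → y ∈ F τ n) ∧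
    ∀ n, natOf A n ∈ F (fpre f (u n)) n

/-- Uniform reducibility with tiny use to a function oracle. -/
def UTtuRedFn (A : ℕ → Bool) (f : ℕ → ℕ) : Prop :=
  ∃ u : ℕ → ℕ, (∀ h, IsOrder h → ∀ᶠ n in atTop, u n ≤ h n) ∧ RedUseFn A f u

/-- The graph of `f`, coded as a set via the standard pairing. -/
def graphOf (f : ℕ → ℕ) : ℕ → Bool :=
  fun m => decide (f (Nat.unpair m).1 = (Nat.unpair m).2)

/-- The real number with binary expansion `X`. -/
noncomputable def realOf (X : ℕ → Bool) : ℝ := ∑' n, cond (X n) (((2:ℝ) ^ (n + 1))⁻¹) 0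

/-- `X` is a left-c.e. real. -/
def LeftCE (X : ℕ → Bool) : Prop :=
  ∃ q : ℕ → ℚ, Computable q ∧ Monotone q ∧
    Tendsto (fun n => (q n : ℝ)) atTop (nhds (realOf X))

/-- `X` is Martin-Löf random: it passes every Martin-Löf test (given as a uniformly
c.e. sequence of sets of strings of measure at most `2^{-n}`). -/
def MLRandom (X : ℕ → Bool) : Prop :=
  ∀ W : ℕ → List Bool → Prop,
    REPred (fun p : ℕ × List Bool => W p.1 p.2) →
    (∀ n, ∑' σ : {σ : List Bool // W n σ}, ((2:ℝ) ^ (σ : List Bool).length)⁻¹ ≤ ((2:ℝ) ^ n)⁻¹) →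
    ∃ n, ∀ σ, W n σ → opre X σ.length ≠ σ

/-- `A` is a c.e. set. -/
def CeSet (A : ℕ → Bool) : Prop := REPred (fun n => A n = true)

/-!
Given an order `h` and a wtt reduction of `A'` to `A` with computable use `u`, pull `h` back
along `u`: `k ↦ h (least n with k < u n + n)` is again an order, and a reduction of `A` to `B`
with that use answers every query `A k` with `k < u n` from `B↾h n`; feeding the answers to the
wtt reduction computes `A' n` from `B↾h n`. For the join, reduce `A₁` and `A₂` with the orders
`k ↦ h (2k)` and `k ↦ h (2k + 1)`.
-/

lemma opre_prefix (X : ℕ → Bool) {m n : ℕ} (h : m ≤ n) : opre X m <+: opre X n :=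
  (List.prefix_iff_eq_take.2 (by simp [List.take_range, h])).map X

lemma opre_succ (X : ℕ → Bool) (m : ℕ) : opre X (m + 1) = opre X m ++ [X m] := by
  simp [opre, List.range_succ]

lemma decide_natOf_eq_one (A : ℕ → Bool) (k : ℕ) : decide (natOf A k = 1) = A k := by
  cases hA : A k <;> simp [natOf, hA]

lemma IsOrder.comp {h f : ℕ → ℕ} (hh : IsOrder h) (hf : IsOrder f) : IsOrder (h ∘ f) := by
  refine ⟨hh.1.comp hf.1, hh.2.1.comp hf.2.1, fun m => ?_⟩
  obtain ⟨n₀, hn₀⟩ := hh.2.2 m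
  obtain ⟨n, hn⟩ := hf.2.2 n₀
  exact ⟨n, hn₀.trans (hh.2.1 hn)⟩

lemma isOrder_of_strictMono {f : ℕ → ℕ} (hc : Computable f) (hf : StrictMono f) : IsOrder f :=
  ⟨hc, hf.monotone, fun m => ⟨m, hf.id_le m⟩⟩

section useInv

-- The summand `n` makes the search terminate and the result unbounded, whatever `u` is.
def useInv (u : ℕ → ℕ) (k : ℕ) : ℕ := Nat.find (⟨k + 1, by omega⟩ : ∃ n, k < u n + n)

variable {u : ℕ → ℕ}

lemma useInv_le_of_lt {k n : ℕ} (h : k < u n) : useInv u k ≤ n :=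
  Nat.find_min' _ (by omega)

lemma lt_useInv_add (k : ℕ) : k < u (useInv u k) + useInv u k :=
  Nat.find_spec (p := fun n => k < u n + n) _

lemma useInv_mono : Monotone (useInv u) := fun _ _ hk =>
  Nat.find_min' _ (lt_of_le_of_lt hk (lt_useInv_add _))

lemma exists_le_useInv (N : ℕ) : ∃ k, N ≤ useInv u k := by
  refine ⟨∑ n ∈ Finset.range N, (u n + n), (Nat.le_find_iff _ _).2 fun n hn => not_lt.2 ?_⟩
  exact Finset.single_le_sum (f := fun n => u n + n) (fun _ _ => Nat.zero_le _)
    (Finset.mem_range.2 hn)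

lemma isOrder_useInv (hu : Computable u) : IsOrder (useInv u) := by
  refine ⟨Computable.find ?_ _, useInv_mono, exists_le_useInv⟩
  exact ⟨inferInstance, (Primrec.nat_lt.decide.to_comp).comp Computable.fst
    ((Primrec.nat_add.to_comp).comp (hu.comp Computable.snd) Computable.snd)⟩

end useInv

section outputBits

variable {F : List Bool → ℕ →. ℕ}

def outputBits (F : List Bool → ℕ →. ℕ) (σ : List Bool) (m : ℕ) : Part (List Bool) :=
  Nat.rec (Part.some []) (fun k l => l.bind fun l => (F σ k).map fun y => l ++ [decide (y = 1)]) m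

lemma Partrec₂.outputBits (hF : Partrec₂ F) : Partrec₂ (outputBits F) := by
  have hstep : Partrec₂ fun (p : List Bool × ℕ) (q : ℕ × List Bool) =>
      (F p.1 q.1).map fun y => q.2 ++ [decide (y = 1)] :=
    Partrec.map (hF.comp (Computable.fst.comp Computable.fst) (Computable.fst.comp Computable.snd))
      ((Computable.list_concat).comp (Computable.snd.comp (Computable.snd.comp Computable.fst))
        ((Primrec.eq.decide.to_comp).comp Computable.snd (Computable.const 1))).to₂
  exact Partrec.nat_rec Computable.snd (Partrec.const' _) hstep

lemma opre_mem_outputBits {A : ℕ → Bool} {σ : List Bool} {m : ℕ}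
    (h : ∀ k < m, natOf A k ∈ F σ k) : opre A m ∈ outputBits F σ m := by
  induction m with
  | zero => exact Part.mem_some _
  | succ m ih =>
    rw [opre_succ, ← decide_natOf_eq_one A m]
    exact Part.mem_bind (ih fun k hk => h k (hk.trans m.lt_succ_self))
      (Part.mem_map _ (h m m.lt_succ_self))

lemma outputBits_mono (hF : ∀ (σ τ : List Bool) (n y : ℕ), σ <+: τ → y ∈ F σ n → y ∈ F τ n)
    {σ τ : List Bool} (hστ : σ <+: τ) {m : ℕ} {l : List Bool} (hl : l ∈ outputBits F σ m) :
    l ∈ outputBits F τ m := by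
  induction m generalizing l with
  | zero => exact hl
  | succ m ih =>
    obtain ⟨l', hl', hl⟩ := Part.mem_bind_iff.1 hl
    obtain ⟨y, hy, rfl⟩ := (Part.mem_map_iff _).1 hl
    exact Part.mem_bind (ih hl') (Part.mem_map _ (hF σ τ m y hστ hy))

end outputBits

theorem RedUse.comp {f : ℕ → ℕ} {A B : ℕ → Bool} {u g h : ℕ → ℕ} (hf : RedUse f A u)
    (hu : Computable u) (hA : SRedUse A B g) (hgh : ∀ n k, k < u n → g k ≤ h n) :
    RedUse f B h := by
  obtain ⟨Φ, hΦ, hΦ_mono, hΦf⟩ := hf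
  obtain ⟨F, hF, hF_mono, hFA⟩ := hA
  refine ⟨fun σ n => (outputBits F σ (u n)).bind fun l => Φ l n, ?_, ?_, fun n => ?_⟩
  · exact Partrec.bind (hF.outputBits.comp Computable.fst (hu.comp Computable.snd))
      (hΦ.comp Computable.snd (Computable.snd.comp Computable.fst)).to₂
  · intro σ τ n y hστ hy
    obtain ⟨l, hl, hy⟩ := Part.mem_bind_iff.1 hy
    exact Part.mem_bind (outputBits_mono hF_mono hστ hl) hy
  · have hA_bits : ∀ k < u n, natOf A k ∈ F (opre B (h n)) k := fun k hk =>
      hF_mono _ _ k _ (opre_prefix B (hgh n k hk)) (hFA k)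
    exact Part.mem_bind (opre_mem_outputBits hA_bits) (hΦf n)

theorem TtuRed.of_sWttRed {A A' B : ℕ → Bool} (hA : TtuRed A B) (hA' : SWttRed A' A) :
    TtuRed A' B := by
  obtain ⟨u, hu, hred⟩ := hA'
  intro h hh
  exact hred.comp hu (hA _ (hh.comp (isOrder_useInv hu))) fun n k hk =>
    hh.2.1 (useInv_le_of_lt hk)

lemma join_two_mul (A₁ A₂ : ℕ → Bool) (k : ℕ) : join A₁ A₂ (2 * k) = A₁ k := by
  simp [_root_.join]

lemma join_two_mul_add_one (A₁ A₂ : ℕ → Bool) (k : ℕ) : join A₁ A₂ (2 * k + 1) = A₂ k := by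
  simp [_root_.join, Nat.mul_add_div]

theorem SRedUse.join {A₁ A₂ B : ℕ → Bool} {h : ℕ → ℕ} (h₁ : SRedUse A₁ B fun k => h (2 * k))
    (h₂ : SRedUse A₂ B fun k => h (2 * k + 1)) : SRedUse (join A₁ A₂) B h := by
  obtain ⟨F₁, hF₁, hF₁_mono, hF₁A⟩ := h₁
  obtain ⟨F₂, hF₂, hF₂_mono, hF₂A⟩ := h₂
  refine ⟨fun σ n => if n % 2 = 0 then F₁ σ (n / 2) else F₂ σ (n / 2), ?_, ?_, fun n => ?_⟩
  · have hhalf : Computable fun p : List Bool × ℕ => p.2 / 2 :=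
      (Primrec.nat_div.to_comp).comp Computable.snd (Computable.const 2)
    have heven : Computable fun p : List Bool × ℕ => decide (p.2 % 2 = 0) :=
      (Primrec.eq.decide.to_comp).comp
        ((Primrec.nat_mod.to_comp).comp Computable.snd (Computable.const 2)) (Computable.const 0)
    refine (Partrec.cond heven (hF₁.comp Computable.fst hhalf)
      (hF₂.comp Computable.fst hhalf)).of_eq fun p => ?_
    simp only [Bool.cond_decide]
  · intro σ τ n y hστ hy
    dsimp only at hy ⊢
    split_ifs at hy ⊢
    exacts [hF₁_mono σ τ _ y hστ hy, hF₂_mono σ τ _ y hστ hy]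
  · obtain ⟨k, rfl | rfl⟩ := Nat.even_or_odd' n
    · simpa [natOf, join_two_mul] using hF₁A k
    · simpa [natOf, join_two_mul_add_one, Nat.mul_add_mod, Nat.mul_add_div] using hF₂A k

theorem TtuRed.join {A₁ A₂ B : ℕ → Bool} (h₁ : TtuRed A₁ B) (h₂ : TtuRed A₂ B) :
    TtuRed (join A₁ A₂) B := by
  have hdouble : IsOrder fun k => 2 * k :=
    isOrder_of_strictMono (Primrec.nat_mul.comp (Primrec.const 2) Primrec.id).to_comp
      (strictMono_nat_of_lt_succ fun _ => by omega)
  have hdouble_succ : IsOrder fun k => 2 * k + 1 :=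
    isOrder_of_strictMono
      (Primrec.succ.comp (Primrec.nat_mul.comp (Primrec.const 2) Primrec.id)).to_comp
      (strictMono_nat_of_lt_succ fun _ => by omega)
  intro h hh
  exact SRedUse.join (h₁ _ (hh.comp hdouble)) (h₂ _ (hh.comp hdouble_succ))

theorem stmt7 (B : ℕ → Bool) :
    (∀ A A' : ℕ → Bool, TtuRed A B → SWttRed A' A → TtuRed A' B) ∧
      (∀ A₁ A₂ : ℕ → Bool, TtuRed A₁ B → TtuRed A₂ B → TtuRed (join A₁ A₂) B) :=
  ⟨fun _ _ hA hA' => hA.of_sWttRed hA', fun _ _ h₁ h₂ => h₁.join h₂⟩
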